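/- arXiv:1703.08631 — 2 statements merged into one kernel-verified Lean document; each statement's English description precedes it below -/
import Mathlib

section
/- In the setup below, suppose additionally that c(n,m,i) ∈ R (for 1 ≤ n ≤ m and 0 ≤ i ≤ n) satisfy ε_n·ε_m = Σ_{i=0}^{n} c(n,m,i)·ε_{m+i} for every pair 1 ≤ n ≤ m, and that for every pair 1 ≤ n ≤ m the family (ε_m, ε_{m+1}, …, ε_{m+n}) is R-linearly independent in A. Then for all 1 ≤ n ≤ m and 0 ≤ i ≤ n: n!·c(n,m,i) = ((m+i)!/m!)·h_{n−i}(q_m, …, q_{m+i}) − Σ_{k=max(i,1)}^{n−1} k!·h_{n−k}(q₁, …, q_k)·c(k,m,i). -/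
/-!
Iterating the Chevalley relation gives
`ε₁ⁿ·ε_m = Σᵢ ((m+i)!/m!)·h_{n−i}(q_m,…,q_{m+i})·ε_{m+i}`: multiplying once more by `ε₁`, the
coefficients obey the recursion `h_{d+1}(S ∪ {r}) = x_r·h_d(S ∪ {r}) + h_{d+1}(S)` of complete
homogeneous polynomials. For `m = 1` this writes `ε₁ⁿ` in terms of `ε₁, …, ε_n`; multiplying that
by `ε_m` and expanding each `ε_k·ε_m` with the structure constants gives a second expansion of
`ε₁ⁿ·ε_m` in `ε_m, …, ε_{m+n}`. Comparing coefficients and isolating the term `k = n` yields the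
recursion.
-/

open Finset

/-- `hsum d s x` is the complete homogeneous symmetric polynomial of degree `d` in the
variables `x i`, `i ∈ s`: the sum of all monomials of degree `d` in these variables
(with `hsum 0 s x = 1`). -/
def hsum {R : Type*} [CommSemiring R] (d : ℕ) (s : Finset ℕ) (x : ℕ → R) : R :=
  ∑ μ ∈ s.sym d, ((μ : Multiset ℕ).map x).prod

open scoped Nat

section hsum

variable {R : Type*} [CommSemiring R]

theorem hsum_zero (s : Finset ℕ) (x : ℕ → R) : hsum 0 s x = 1 := by
  rw [hsum, sym_zero, sum_singleton]
  rfl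

theorem hsum_singleton (d r : ℕ) (x : ℕ → R) : hsum d {r} x = x r ^ d := by
  simp [hsum, sym_singleton, Sym.coe_replicate]

theorem hsum_succ_insert {r : ℕ} {t : Finset ℕ} (hr : r ∉ t) (d : ℕ) (x : ℕ → R) :
    hsum (d + 1) (insert r t) x = x r * hsum d (insert r t) x + hsum (d + 1) t x := by
  classical
  have h_mem :
      ((insert r t).sym (d + 1)).filter (r ∈ ·) = ((insert r t).sym d).image (Sym.cons r) := by
    ext μ
    simp only [mem_filter, mem_image, mem_sym_iff]
    constructor
    · rintro ⟨hμ, hrμ⟩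
      exact ⟨μ.erase r hrμ, fun a ha => hμ a (Multiset.mem_of_mem_erase ha), Sym.cons_erase hrμ⟩
    · rintro ⟨ν, hν, rfl⟩
      refine ⟨fun a ha => ?_, Sym.mem_cons_self r ν⟩
      rcases Sym.mem_cons.1 ha with rfl | ha
      exacts [mem_insert_self a t, hν a ha]
  have h_not_mem : ((insert r t).sym (d + 1)).filter (r ∉ ·) = t.sym (d + 1) := by
    ext μ
    simp only [mem_filter, mem_sym_iff, mem_insert]
    constructor
    · rintro ⟨hμ, hrμ⟩ a ha
      exact (hμ a ha).resolve_left fun h => hrμ (h ▸ ha)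
    · exact fun hμ => ⟨fun a ha => Or.inr (hμ a ha), fun hrμ => hr (hμ r hrμ)⟩
  rw [hsum, ← sum_filter_add_sum_filter_not _ (r ∈ ·), h_mem, h_not_mem,
    sum_image fun _ _ _ _ h => (Sym.cons_inj_right r _ _).1 h, hsum, mul_sum]
  simp only [Sym.coe_cons, Multiset.map_cons, Multiset.prod_cons]
  rfl

end hsum

theorem Finset.sum_range_succ_succ_of_eq_add_shift {M : Type*} [AddCommMonoid M] {F G H : ℕ → M}
    {n : ℕ} (h_zero : F 0 = G 0) (h_succ : ∀ i < n, F (i + 1) = G (i + 1) + H i)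
    (h_last : F (n + 1) = H n) :
    ∑ i ∈ range (n + 1 + 1), F i = ∑ i ∈ range (n + 1), G i + ∑ i ∈ range (n + 1), H i := by
  rw [sum_range_succ', sum_range_succ, sum_range_succ' G, sum_range_succ H, h_zero, h_last,
    sum_congr rfl fun i hi => h_succ i (mem_range.1 hi), sum_add_distrib]
  abel

theorem Finset.sum_Icc_smul_sum_range_eq {R M : Type*} [Semiring R] [AddCommMonoid M] [Module R M]
    (w : ℕ → R) (c : ℕ → ℕ → R) (v : ℕ → M) (n : ℕ) :
    ∑ k ∈ Icc 1 n, w k • ∑ i ∈ range (k + 1), c k i • v i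
      = ∑ i ∈ range (n + 1), (∑ k ∈ Icc (max i 1) n, w k * c k i) • v i := by
  simp_rw [smul_sum, smul_smul, sum_smul]
  exact sum_comm' fun k i => by simp only [mem_Icc, mem_range]; omega

theorem LinearIndependent.eq_of_sum_range_smul_eq {R M : Type*} [Semiring R] [AddCommMonoid M]
    [Module R M] {n : ℕ} {v : ℕ → M} (hv : LinearIndependent R fun i : Fin (n + 1) => v i)
    {f g : ℕ → R} (h : ∑ i ∈ range (n + 1), f i • v i = ∑ i ∈ range (n + 1), g i • v i)
    {i : ℕ} (hi : i ≤ n) : f i = g i := by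
  rw [← Fin.sum_univ_eq_sum_range (fun i => f i • v i),
    ← Fin.sum_univ_eq_sum_range (fun i => g i • v i)] at h
  exact Fintype.linearIndependent_iffₛ.1 hv (f ∘ (↑)) (g ∘ (↑)) h ⟨i, by omega⟩

section chevalleyCoeff

variable {R : Type*} [CommSemiring R] (q : ℕ → R) (m : ℕ)

def chevalleyCoeff (n i : ℕ) : R :=
  (m + i).descFactorial i • hsum (n - i) (Icc m (m + i)) q

theorem chevalleyCoeff_succ_zero (n : ℕ) :
    chevalleyCoeff q m (n + 1) 0 = q m * chevalleyCoeff q m n 0 := by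
  simp [chevalleyCoeff, hsum_singleton, pow_succ']

theorem chevalleyCoeff_succ_succ {n i : ℕ} (hi : i < n) :
    chevalleyCoeff q m (n + 1) (i + 1)
      = q (m + i + 1) * chevalleyCoeff q m n (i + 1) + (m + i + 1) • chevalleyCoeff q m n i := by
  have h_deg : n + 1 - (i + 1) = n - (i + 1) + 1 := by omega
  have h_deg' : n - (i + 1) + 1 = n - i := by omega
  rw [chevalleyCoeff, chevalleyCoeff, chevalleyCoeff, ← add_assoc, Nat.succ_descFactorial_succ,
    h_deg, ← insert_Icc_right_eq_Icc_add_one (by omega),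
    hsum_succ_insert (by simp), h_deg']
  simp only [nsmul_eq_mul, Nat.cast_mul, Nat.cast_add, Nat.cast_one]
  ring

theorem chevalleyCoeff_succ_self (n : ℕ) :
    chevalleyCoeff q m (n + 1) (n + 1) = (m + n + 1) • chevalleyCoeff q m n n := by
  rw [chevalleyCoeff, chevalleyCoeff, ← add_assoc, Nat.succ_descFactorial_succ, Nat.sub_self,
    Nat.sub_self, hsum_zero, hsum_zero, mul_smul]

end chevalleyCoeff

section Chevalley

variable {R A : Type*} [CommSemiring R] [Semiring A] [Algebra R A] {q : ℕ → R} {ε : ℕ → A}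

theorem pow_mul_eq_sum_chevalleyCoeff
    (hchev : ∀ m : ℕ, 1 ≤ m → ε 1 * ε m = q m • ε m + (m + 1) • ε (m + 1))
    {m : ℕ} (hm : 1 ≤ m) (n : ℕ) :
    ε 1 ^ n * ε m = ∑ i ∈ range (n + 1), chevalleyCoeff q m n i • ε (m + i) := by
  induction n with
  | zero => simp [chevalleyCoeff, hsum_zero]
  | succ n ih =>
    have h_step : ε 1 ^ (n + 1) * ε m
        = ∑ i ∈ range (n + 1), (q (m + i) * chevalleyCoeff q m n i) • ε (m + i)
          + ∑ i ∈ range (n + 1), ((m + i + 1) • chevalleyCoeff q m n i) • ε (m + i + 1) := by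
      rw [pow_succ', mul_assoc, ih, mul_sum, ← sum_add_distrib]
      refine sum_congr rfl fun i _ => ?_
      rw [mul_smul_comm, hchev (m + i) (by omega), smul_add, smul_smul, mul_comm, smul_assoc,
        smul_comm]
    rw [h_step]
    symm
    apply sum_range_succ_succ_of_eq_add_shift
    · rw [chevalleyCoeff_succ_zero, add_zero]
    · intro i hi
      rw [chevalleyCoeff_succ_succ q m hi, add_smul]
      rfl
    · rw [chevalleyCoeff_succ_self]
      rfl

theorem pow_succ_eq_sum
    (hchev : ∀ m : ℕ, 1 ≤ m → ε 1 * ε m = q m • ε m + (m + 1) • ε (m + 1)) (n : ℕ) :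
    ε 1 ^ (n + 1) = ∑ k ∈ Icc 1 (n + 1), (k ! • hsum (n + 1 - k) (Icc 1 k) q) • ε k := by
  rw [pow_succ, pow_mul_eq_sum_chevalleyCoeff hchev le_rfl, ← Ico_add_one_right_eq_Icc,
    sum_Ico_eq_sum_range]
  refine sum_congr rfl fun j _ => ?_
  have h_desc : (1 + j).descFactorial j = (1 + j)! := by
    simpa using Nat.factorial_mul_descFactorial (Nat.le_add_left j 1)
  rw [chevalleyCoeff, h_desc, show n + 1 - (1 + j) = n - j by omega]

theorem chevalleyCoeff_eq_sum
    (hchev : ∀ m : ℕ, 1 ≤ m → ε 1 * ε m = q m • ε m + (m + 1) • ε (m + 1))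
    {c : ℕ → ℕ → ℕ → R}
    (hc : ∀ n m : ℕ, 1 ≤ n → n ≤ m → ε n * ε m = ∑ i ∈ range (n + 1), c n m i • ε (m + i))
    {n m i : ℕ} (hli : LinearIndependent R fun i : Fin (n + 1) => ε (m + (i : ℕ)))
    (hn : 1 ≤ n) (hnm : n ≤ m) (hi : i ≤ n) :
    chevalleyCoeff q m n i
      = ∑ k ∈ Icc (max i 1) n, (k ! • hsum (n - k) (Icc 1 k) q) * c k m i := by
  obtain ⟨n, rfl⟩ : ∃ n', n = n' + 1 := ⟨n - 1, by omega⟩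
  refine hli.eq_of_sum_range_smul_eq (v := fun j => ε (m + j)) (f := chevalleyCoeff q m (n + 1))
    (g := fun j => ∑ k ∈ Icc (max j 1) (n + 1), (k ! • hsum (n + 1 - k) (Icc 1 k) q) * c k m j)
    ?_ hi
  rw [← pow_mul_eq_sum_chevalleyCoeff hchev (by omega), pow_succ_eq_sum hchev, sum_mul,
    ← sum_Icc_smul_sum_range_eq _ (fun k i => c k m i) (fun i => ε (m + i))]
  refine sum_congr rfl fun k hk => ?_
  rw [mem_Icc] at hk
  rw [smul_mul_assoc, hc k m hk.1 (by omega)]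

end Chevalley

/-- Given the Chevalley relation, structure constants `c n m i` with
`ε_n·ε_m = Σ_{i=0}^{n} c(n,m,i)·ε_{m+i}` for `1 ≤ n ≤ m`, and linear independence of
`(ε_m, …, ε_{m+n})`, the structure constants satisfy the recursion
`n!·c(n,m,i) = ((m+i)!/m!)·h_{n−i}(q_m,…,q_{m+i}) − Σ_{k=max(i,1)}^{n−1} k!·h_{n−k}(q₁,…,q_k)·c(k,m,i)`. -/
theorem stmt17 {R A : Type*} [CommRing R] [CommRing A] [Algebra R A]
    (q : ℕ → R) (ε : ℕ → A)
    (hchev : ∀ m : ℕ, 1 ≤ m → ε 1 * ε m = q m • ε m + (m + 1) • ε (m + 1))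
    (c : ℕ → ℕ → ℕ → R)
    (hc : ∀ n m : ℕ, 1 ≤ n → n ≤ m →
      ε n * ε m = ∑ i ∈ range (n + 1), c n m i • ε (m + i))
    (hli : ∀ n m : ℕ, 1 ≤ n → n ≤ m →
      LinearIndependent R (fun i : Fin (n + 1) => ε (m + (i : ℕ)))) :
    ∀ n m i : ℕ, 1 ≤ n → n ≤ m → i ≤ n →
      n.factorial • c n m i
        = ((m + i).factorial / m.factorial) • hsum (n - i) (Icc m (m + i)) q
          - ∑ k ∈ Icc (max i 1) (n - 1), k.factorial • (hsum (n - k) (Icc 1 k) q * c k m i) := by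
  intro n m i hn hnm hi
  have h_coeff := chevalleyCoeff_eq_sum hchev hc (hli n m hn hnm) hn hnm hi
  rw [chevalleyCoeff, Nat.descFactorial_eq_div (Nat.le_add_left i m), Nat.add_sub_cancel,
    ← insert_Icc_sub_one_right_eq_Icc (a := max i 1) (b := n) (by omega),
    sum_insert (by simp; omega), Nat.sub_self, hsum_zero, smul_mul_assoc, one_mul] at h_coeff
  simp_rw [h_coeff, smul_mul_assoc]
  abel
end

section
/- For all integers i ≥ 1 and j ≥ 0, Σ_{ℓ=i}^{i+j} q_ℓ equals: (1/12)(3i²+2j+6ij+3i²j+3j²+3ij²+j³)·α₀ + (1/12)(6i+3i²+2j+6ij+3i²j+3j²+3ij²+j³)·α₁ if i and j are both even; (1/12)(1+j)(3i+3i²+2j+3ij+j²)·(α₀+α₁) if i and j are both odd; (1/12)(1+j)(3+3i+3i²+2j+3ij+j²)·α₀ + (1/12)(1+j)(−3+3i+3i²+2j+3ij+j²)·α₁ if i is even and j is odd; (1/12)(3+6i+3i²+5j+6ij+3i²j+3j²+3ij²+j³)·α₀ + (1/12)(−3+3i²−j+6ij+3i²j+3j²+3ij²+j³)·α₁ if i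 is odd and j is even. -/
/-!
Writing `C c * X k` as `c • X k`, the prefix sums `∑_{ℓ < n} q ℓ` are cubic in `n` up to a
parity correction in `(-1) ^ n`, which a one-step induction verifies by splitting on the parity
of the new index. The sum over `[i, i + j]` is the difference of two prefix sums, and fixing the
parities of `i` and `j` fixes both signs, leaving an identity of `ℚ`-linear combinations of
`X 0` and `X 1`.
-/

open MvPolynomial Finset

/-- The equivariant Chevalley coefficient `q_j = ⌈j/2⌉²·α₀ + (⌊j/2⌋² + ⌊j/2⌋)·α₁`
in `ℚ[α₀, α₁]`, with `α₀ = X 0` and `α₁ = X 1`. -/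
noncomputable def q (j : ℕ) : MvPolynomial (Fin 2) ℚ :=
  C ((((j + 1) / 2 : ℕ) : ℚ) ^ 2) * X 0 +
    C ((((j / 2 : ℕ) : ℚ)) ^ 2 + (((j / 2 : ℕ) : ℚ))) * X 1

lemma q_two_mul (k : ℕ) : q (2 * k) = (k : ℚ) ^ 2 • X 0 + ((k : ℚ) ^ 2 + k) • X 1 := by
  rw [q, show (2 * k + 1) / 2 = k by omega, show 2 * k / 2 = k by omega, C_mul', C_mul']

lemma q_two_mul_add_one (k : ℕ) :
    q (2 * k + 1) = ((k : ℚ) + 1) ^ 2 • X 0 + ((k : ℚ) ^ 2 + k) • X 1 := by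
  rw [q, show (2 * k + 1 + 1) / 2 = k + 1 by omega, show (2 * k + 1) / 2 = k by omega, C_mul',
    C_mul', Nat.cast_succ]

lemma sum_range_q (n : ℕ) :
    ∑ ℓ ∈ range n, q ℓ =
      ((2 * (n : ℚ) ^ 3 + n + 3 * n * (-1) ^ n) / 24) • X 0 +
        ((2 * (n : ℚ) ^ 3 - 5 * n - 3 * n * (-1) ^ n) / 24) • X 1 := by
  induction n with
  | zero => simp
  | succ n ih =>
    rw [sum_range_succ, ih, pow_succ (-1 : ℚ)]
    obtain ⟨k, rfl | rfl⟩ := Nat.even_or_odd' n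
    · rw [q_two_mul, (even_two_mul k).neg_one_pow]
      push_cast
      module
    · rw [q_two_mul_add_one, (odd_two_mul_add_one k).neg_one_pow]
      push_cast
      module

theorem stmt19_general (i j : ℕ) :
    (Even i ∧ Even j → ∑ ℓ ∈ Icc i (i + j), q ℓ
        = C ((1 / 12) * (3 * (i : ℚ) ^ 2 + 2 * j + 6 * i * j + 3 * (i : ℚ) ^ 2 * j
              + 3 * (j : ℚ) ^ 2 + 3 * i * (j : ℚ) ^ 2 + (j : ℚ) ^ 3)) * X 0
          + C ((1 / 12) * (6 * (i : ℚ) + 3 * (i : ℚ) ^ 2 + 2 * j + 6 * i * j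
              + 3 * (i : ℚ) ^ 2 * j + 3 * (j : ℚ) ^ 2 + 3 * i * (j : ℚ) ^ 2 + (j : ℚ) ^ 3)) * X 1) ∧
    (Odd i ∧ Odd j → ∑ ℓ ∈ Icc i (i + j), q ℓ
        = C ((1 / 12) * (1 + (j : ℚ)) * (3 * i + 3 * (i : ℚ) ^ 2 + 2 * j + 3 * i * j
              + (j : ℚ) ^ 2)) * (X 0 + X 1)) ∧
    (Even i ∧ Odd j → ∑ ℓ ∈ Icc i (i + j), q ℓ
        = C ((1 / 12) * (1 + (j : ℚ)) * (3 + 3 * i + 3 * (i : ℚ) ^ 2 + 2 * j + 3 * i * j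
              + (j : ℚ) ^ 2)) * X 0
          + C ((1 / 12) * (1 + (j : ℚ)) * (-3 + 3 * i + 3 * (i : ℚ) ^ 2 + 2 * j + 3 * i * j
              + (j : ℚ) ^ 2)) * X 1) ∧
    (Odd i ∧ Even j → ∑ ℓ ∈ Icc i (i + j), q ℓ
        = C ((1 / 12) * (3 + 6 * (i : ℚ) + 3 * (i : ℚ) ^ 2 + 5 * j + 6 * i * j
              + 3 * (i : ℚ) ^ 2 * j + 3 * (j : ℚ) ^ 2 + 3 * i * (j : ℚ) ^ 2 + (j : ℚ) ^ 3)) * X 0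
          + C ((1 / 12) * (-3 + 3 * (i : ℚ) ^ 2 - j + 6 * i * j + 3 * (i : ℚ) ^ 2 * j
              + 3 * (j : ℚ) ^ 2 + 3 * i * (j : ℚ) ^ 2 + (j : ℚ) ^ 3)) * X 1) := by
  rw [← Ico_add_one_right_eq_Icc, sum_Ico_eq_sub _ (by omega), sum_range_q, sum_range_q,
    pow_succ (-1 : ℚ) (i + j), pow_add (-1 : ℚ) i j]
  simp only [C_mul']
  push_cast
  refine ⟨fun ⟨hi, hj⟩ ↦ ?_, fun ⟨hi, hj⟩ ↦ ?_, fun ⟨hi, hj⟩ ↦ ?_, fun ⟨hi, hj⟩ ↦ ?_⟩ <;>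
    rw [hi.neg_one_pow, hj.neg_one_pow] <;> module

/-- Closed form for `Q¹_{i,j} = Σ_{ℓ=i}^{i+j} q_ℓ` according to the parities of `i` and `j`. -/
theorem stmt19 (i j : ℕ) (hi : 1 ≤ i) :
    (Even i ∧ Even j → ∑ ℓ ∈ Icc i (i + j), q ℓ
        = C ((1 / 12) * (3 * (i : ℚ) ^ 2 + 2 * j + 6 * i * j + 3 * (i : ℚ) ^ 2 * j
              + 3 * (j : ℚ) ^ 2 + 3 * i * (j : ℚ) ^ 2 + (j : ℚ) ^ 3)) * X 0
          + C ((1 / 12) * (6 * (i : ℚ) + 3 * (i : ℚ) ^ 2 + 2 * j + 6 * i * j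
              + 3 * (i : ℚ) ^ 2 * j + 3 * (j : ℚ) ^ 2 + 3 * i * (j : ℚ) ^ 2 + (j : ℚ) ^ 3)) * X 1) ∧
    (Odd i ∧ Odd j → ∑ ℓ ∈ Icc i (i + j), q ℓ
        = C ((1 / 12) * (1 + (j : ℚ)) * (3 * i + 3 * (i : ℚ) ^ 2 + 2 * j + 3 * i * j
              + (j : ℚ) ^ 2)) * (X 0 + X 1)) ∧
    (Even i ∧ Odd j → ∑ ℓ ∈ Icc i (i + j), q ℓ
        = C ((1 / 12) * (1 + (j : ℚ)) * (3 + 3 * i + 3 * (i : ℚ) ^ 2 + 2 * j + 3 * i * j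
              + (j : ℚ) ^ 2)) * X 0
          + C ((1 / 12) * (1 + (j : ℚ)) * (-3 + 3 * i + 3 * (i : ℚ) ^ 2 + 2 * j + 3 * i * j
              + (j : ℚ) ^ 2)) * X 1) ∧
    (Odd i ∧ Even j → ∑ ℓ ∈ Icc i (i + j), q ℓ
        = C ((1 / 12) * (3 + 6 * (i : ℚ) + 3 * (i : ℚ) ^ 2 + 5 * j + 6 * i * j
              + 3 * (i : ℚ) ^ 2 * j + 3 * (j : ℚ) ^ 2 + 3 * i * (j : ℚ) ^ 2 + (j : ℚ) ^ 3)) * X 0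
          + C ((1 / 12) * (-3 + 3 * (i : ℚ) ^ 2 - j + 6 * i * j + 3 * (i : ℚ) ^ 2 * j
              + 3 * (j : ℚ) ^ 2 + 3 * i * (j : ℚ) ^ 2 + (j : ℚ) ^ 3)) * X 1) :=
  stmt19_general i j
end
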